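/- Let σ be an n-Ahlfors regular measure with support Σ and S_ρ the smoothing operator with kernel s_ρ satisfying: supp s_ρ(x,·) ⊂ B̄(x,2ρ), Lip(s_ρ(·,y)) ≲ ρ^{−n−1}, S_ρ1 = 1, and s_ρ ≥ 0 with ∫ s_ρ(x,y) dσ(y) = 1. If g is Lipschitz on Σ, then S_ρ g is Lipschitz on Σ with Lip(S_ρ g) ≤ C·Lip(g), where C depends only on n and the Ahlfors regularity constants, not on ρ. -/

import Mathlib

open MeasureTheory Metric Set ENNReal NNReal

noncomputable section

/-- The support of a measure on a metric space. -/
def msupport {X : Type*} [MetricSpace X] [MeasurableSpace X] (μ : Measure X) : Set X :=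
  {x | ∀ r : ℝ, 0 < r → 0 < μ (ball x r)}

/-- `μ` is `n`-Ahlfors regular with constant `C₀`:
`C₀⁻¹ r^n ≤ μ(B(x,r)) ≤ C₀ r^n` for `x ∈ supp μ` and `0 < r ≤ diam (supp μ)`. -/
def IsAhlforsRegular {X : Type*} [MetricSpace X] [MeasurableSpace X]
    (μ : Measure X) (n : ℕ) (C₀ : ℝ) : Prop :=
  1 ≤ C₀ ∧ ∀ x ∈ msupport μ, ∀ r : ℝ, 0 < r → r ≤ Metric.diam (msupport μ) →
    ENNReal.ofReal (C₀⁻¹ * r ^ n) ≤ μ (closedBall x r) ∧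
      μ (closedBall x r) ≤ ENNReal.ofReal (C₀ * r ^ n)

/-- The complement of the measure support is null (finite measure on Euclidean space). -/
lemma msupport_compl_null (m : ℕ) (σ : Measure (EuclideanSpace ℝ (Fin m)))
    [IsFiniteMeasure σ] : σ (msupport σ)ᶜ = 0 := by
  have h := Measure.everywherePosSubset_ae_eq (μ := σ)
    (s := (univ : Set (EuclideanSpace ℝ (Fin m)))) MeasurableSet.univ
  have h2 : σ (univ \ σ.everywherePosSubset univ) = 0 := (ae_eq_set.1 h).2
  refine measure_mono_null ?_ h2
  intro x hx
  refine ⟨trivial, fun hxE => hx ?_⟩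
  intro r hr
  exact hxE.2 (ball x r) (by rw [nhdsWithin_univ]; exact ball_mem_nhds x hr)

/-- If `s_ρ` is a smoothing kernel on an `n`-Ahlfors regular set `Σ`
(supported in `B̄(x,2ρ)`, Lipschitz with constant `≲ ρ^{−n−1}`, nonnegative, with
`∫ s_ρ(x,y) dσ(y) = 1`), then `S_ρ` maps Lipschitz functions to Lipschitz functions with
`Lip(S_ρ g) ≤ C Lip(g)`, `C` independent of `ρ`. -/
theorem stmt_7 (n : ℕ) (C₀ C₁ : ℝ) (hC₁ : 0 < C₁) :
    ∃ C > 0, ∀ (σ : Measure (EuclideanSpace ℝ (Fin (n + 1)))), IsFiniteMeasure σ →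
      IsAhlforsRegular σ n C₀ →
      ∀ ρ : ℝ, 0 < ρ → ρ < Metric.diam (msupport σ) →
        ∀ s : EuclideanSpace ℝ (Fin (n + 1)) → EuclideanSpace ℝ (Fin (n + 1)) → ℝ,
          (∀ x ∈ msupport σ, ∀ y, y ∉ closedBall x (2 * ρ) → s x y = 0) →
          (∀ y ∈ msupport σ,
            LipschitzOnWith (Real.toNNReal (C₁ * ρ ^ (-(n : ℝ) - 1)))
              (fun x => s x y) (msupport σ)) →
          (∀ x y, 0 ≤ s x y) →
          (∀ x ∈ msupport σ, (∫ y, s x y ∂σ) = 1) →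
          ∀ (g : EuclideanSpace ℝ (Fin (n + 1)) → ℝ) (K : ℝ≥0),
            LipschitzOnWith K g (msupport σ) →
            LipschitzOnWith (Real.toNNReal C * K)
              (fun x => ∫ y, s x y * g y ∂σ) (msupport σ) := by
  set C : ℝ := 5 + 3 ^ (n + 1) * max C₀ 1 * C₁ with hCdef
  have hmax : (0:ℝ) < max C₀ 1 := lt_of_lt_of_le one_pos (le_max_right _ _)
  have hCpos : (0:ℝ) < C := by
    have h1 : (0:ℝ) < 3 ^ (n + 1) * max C₀ 1 * C₁ :=
      mul_pos (mul_pos (pow_pos (by norm_num) _) hmax) hC₁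
    rw [hCdef]; linarith
  refine ⟨C, hCpos, ?_⟩
  intro σ hfin hAhl ρ hρ hρd s hsupp hlip hpos hint g K hg
  obtain ⟨G, hGlip, hGeq⟩ := hg.extend_real
  have hae : ∀ᵐ y ∂σ, y ∈ msupport σ := by
    rw [MeasureTheory.ae_iff]
    exact msupport_compl_null (n + 1) σ
  have hC₀ : (0:ℝ) < C₀ := lt_of_lt_of_le one_pos hAhl.1
  -- integrability of the kernel
  have hIs : ∀ x ∈ msupport σ, Integrable (fun y => s x y) σ := by
    intro x hx
    by_contra h
    have h1 := hint x hx
    rw [integral_undef h] at h1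
    norm_num at h1
  -- integrability of the kernel times G
  have hIsG : ∀ x ∈ msupport σ, Integrable (fun y => s x y * G y) σ := by
    intro x hx
    refine Integrable.mono' ((hIs x hx).mul_const (|G x| + (K:ℝ) * (2 * ρ)))
      ((hIs x hx).aestronglyMeasurable.mul hGlip.continuous.aestronglyMeasurable)
      (Filter.Eventually.of_forall fun y => ?_)
    by_cases hy : y ∈ closedBall x (2 * ρ)
    · have h1 : |G y| ≤ |G x| + (K:ℝ) * (2 * ρ) := by
        have h2 := hGlip.dist_le_mul y x
        rw [Real.dist_eq] at h2
        have h3 : (K:ℝ) * dist y x ≤ (K:ℝ) * (2 * ρ) :=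
          mul_le_mul_of_nonneg_left (mem_closedBall.1 hy) K.coe_nonneg
        calc |G y| = |G x + (G y - G x)| := by ring_nf
          _ ≤ |G x| + |G y - G x| := abs_add_le _ _
          _ ≤ |G x| + (K:ℝ) * (2 * ρ) := by linarith
      rw [Real.norm_eq_abs, abs_mul, abs_of_nonneg (hpos x y)]
      exact mul_le_mul_of_nonneg_left h1 (hpos x y)
    · simp [hsupp x hx y hy]
  -- rewrite g as G inside the integrals
  have hrw : ∀ z, (∫ y, s z y * g y ∂σ) = ∫ y, s z y * G y ∂σ := by
    intro z
    refine integral_congr_ae ?_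
    filter_upwards [hae] with y hy
    rw [hGeq hy]
  -- the smoothed function is close to G
  have hnear : ∀ z ∈ msupport σ, |(∫ y, s z y * G y ∂σ) - G z| ≤ (K:ℝ) * (2 * ρ) := by
    intro z hz
    have hsub : (∫ y, s z y * G y ∂σ) - G z = ∫ y, s z y * (G y - G z) ∂σ := by
      have h1 : ∫ y, s z y * (G y - G z) ∂σ
          = (∫ y, s z y * G y ∂σ) - ∫ y, s z y * G z ∂σ := by
        simp only [mul_sub]
        exact integral_sub (hIsG z hz) ((hIs z hz).mul_const _)
      rw [h1, integral_mul_const, hint z hz, one_mul]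
    rw [hsub]
    calc |∫ y, s z y * (G y - G z) ∂σ|
        ≤ ∫ y, s z y * ((K:ℝ) * (2 * ρ)) ∂σ := by
          rw [← Real.norm_eq_abs]
          refine norm_integral_le_of_norm_le ((hIs z hz).mul_const _)
            (Filter.Eventually.of_forall fun y => ?_)
          by_cases hy : y ∈ closedBall z (2 * ρ)
          · have hd : |G y - G z| ≤ (K:ℝ) * (2 * ρ) := by
              have h1 := hGlip.dist_le_mul y z
              rw [Real.dist_eq] at h1
              exact h1.trans (mul_le_mul_of_nonneg_left (mem_closedBall.1 hy) K.coe_nonneg)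
            rw [Real.norm_eq_abs, abs_mul, abs_of_nonneg (hpos z y)]
            exact mul_le_mul_of_nonneg_left hd (hpos z y)
          · simp [hsupp z hz y hy]
      _ = (K:ℝ) * (2 * ρ) := by rw [integral_mul_const, hint z hz, one_mul]
  rw [lipschitzOnWith_iff_dist_le_mul]
  intro x hx x' hx'
  have hcoe : ((Real.toNNReal C * K : ℝ≥0) : ℝ) = C * K := by
    rw [NNReal.coe_mul, Real.coe_toNNReal _ hCpos.le]
  show dist (∫ y, s x y * g y ∂σ) (∫ y, s x' y * g y ∂σ)
      ≤ ((Real.toNNReal C * K : ℝ≥0) : ℝ) * dist x x'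
  rw [hcoe, hrw x, hrw x']
  set d := dist x x' with hd
  have hdnn : (0:ℝ) ≤ d := dist_nonneg
  -- measure of a 3ρ-ball
  have hball : σ (closedBall x (3 * ρ)) ≤ ENNReal.ofReal (C₀ * (3 * ρ) ^ n) := by
    rcases le_or_gt (3 * ρ) (Metric.diam (msupport σ)) with h | h
    · exact (hAhl.2 x hx (3 * ρ) (by linarith) h).2
    · have hD : 0 < Metric.diam (msupport σ) := hρ.trans hρd
      have hbdd : Bornology.IsBounded (msupport σ) := by
        by_contra hb
        rw [Metric.diam_eq_zero_of_unbounded hb] at hD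
        exact lt_irrefl _ hD
      have hsub : (univ : Set (EuclideanSpace ℝ (Fin (n + 1))))
          ⊆ (msupport σ)ᶜ ∪ closedBall x (Metric.diam (msupport σ)) := by
        intro z _
        by_cases hz : z ∈ msupport σ
        · exact Or.inr (mem_closedBall.2 (Metric.dist_le_diam_of_mem hbdd hz hx))
        · exact Or.inl hz
      calc σ (closedBall x (3 * ρ)) ≤ σ univ := measure_mono (subset_univ _)
        _ ≤ σ ((msupport σ)ᶜ ∪ closedBall x (Metric.diam (msupport σ))) := measure_mono hsub
        _ ≤ σ (msupport σ)ᶜ + σ (closedBall x (Metric.diam (msupport σ))) :=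
            measure_union_le _ _
        _ = σ (closedBall x (Metric.diam (msupport σ))) := by
            rw [msupport_compl_null (n + 1) σ, zero_add]
        _ ≤ ENNReal.ofReal (C₀ * (Metric.diam (msupport σ)) ^ n) :=
            (hAhl.2 x hx _ hD le_rfl).2
        _ ≤ ENNReal.ofReal (C₀ * (3 * ρ) ^ n) := by
            exact ENNReal.ofReal_le_ofReal
              (mul_le_mul_of_nonneg_left (pow_le_pow_left₀ hD.le h.le n) hC₀.le)
  rcases le_or_gt d ρ with hcase | hcase
  · -- main case: d ≤ ρ
    have hLfac : (0:ℝ) < C₁ * ρ ^ (-(n:ℝ) - 1) :=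
      mul_pos hC₁ (Real.rpow_pos_of_pos hρ _)
    have hI1 : Integrable (fun y => s x y * (G y - G x)) σ := by
      have h1 := (hIsG x hx).sub ((hIs x hx).mul_const (G x))
      simpa [mul_sub, Pi.sub_def] using h1
    have hI2 : Integrable (fun y => s x' y * (G y - G x)) σ := by
      have h1 := (hIsG x' hx').sub ((hIs x' hx').mul_const (G x))
      simpa [mul_sub, Pi.sub_def] using h1
    have hkey : (∫ y, s x y * G y ∂σ) - (∫ y, s x' y * G y ∂σ)
        = ∫ y, (s x y - s x' y) * (G y - G x) ∂σ := by
      have e1 : ∫ y, s x y * (G y - G x) ∂σ = (∫ y, s x y * G y ∂σ) - G x := by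
        simp only [mul_sub]
        rw [integral_sub (hIsG x hx) ((hIs x hx).mul_const _), integral_mul_const,
          hint x hx, one_mul]
      have e2 : ∫ y, s x' y * (G y - G x) ∂σ = (∫ y, s x' y * G y ∂σ) - G x := by
        simp only [mul_sub]
        rw [integral_sub (hIsG x' hx') ((hIs x' hx').mul_const _), integral_mul_const,
          hint x' hx', one_mul]
      have e3 : ∫ y, (s x y - s x' y) * (G y - G x) ∂σ
          = (∫ y, s x y * (G y - G x) ∂σ) - ∫ y, s x' y * (G y - G x) ∂σ := by
        simp only [sub_mul]
        exact integral_sub hI1 hI2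
      rw [e3, e1, e2]; ring
    have hbnd : |∫ y, (s x y - s x' y) * (G y - G x) ∂σ|
        ≤ (C₁ * ρ ^ (-(n:ℝ) - 1) * d * ((K:ℝ) * (3 * ρ)))
          * (σ (closedBall x (3 * ρ))).toReal := by
      rw [← Real.norm_eq_abs]
      have hb : Integrable ((closedBall x (3 * ρ)).indicator
          (fun _ => C₁ * ρ ^ (-(n:ℝ) - 1) * d * ((K:ℝ) * (3 * ρ)))) σ :=
        (integrable_const _).indicator measurableSet_closedBall
      have hptwise : ∀ᵐ y ∂σ, ‖(s x y - s x' y) * (G y - G x)‖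
          ≤ (closedBall x (3 * ρ)).indicator
            (fun _ => C₁ * ρ ^ (-(n:ℝ) - 1) * d * ((K:ℝ) * (3 * ρ))) y := by
        filter_upwards [hae] with y hy
        by_cases hmem : y ∈ closedBall x (3 * ρ)
        · rw [indicator_of_mem hmem]
          have h1 : |s x y - s x' y| ≤ C₁ * ρ ^ (-(n:ℝ) - 1) * d := by
            have h2 := (hlip y hy).dist_le_mul x hx x' hx'
            rw [Real.dist_eq] at h2
            calc |s x y - s x' y|
                ≤ (Real.toNNReal (C₁ * ρ ^ (-(n:ℝ) - 1)) : ℝ) * d := h2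
              _ = C₁ * ρ ^ (-(n:ℝ) - 1) * d := by
                  rw [Real.coe_toNNReal _ hLfac.le]
          have h2 : |G y - G x| ≤ (K:ℝ) * (3 * ρ) := by
            have h3 := hGlip.dist_le_mul y x
            rw [Real.dist_eq] at h3
            exact h3.trans (mul_le_mul_of_nonneg_left (mem_closedBall.1 hmem) K.coe_nonneg)
          rw [Real.norm_eq_abs, abs_mul]
          exact mul_le_mul h1 h2 (abs_nonneg _) (mul_nonneg hLfac.le hdnn)
        · rw [indicator_of_notMem hmem]
          have hyx : s x y = 0 := by
            refine hsupp x hx y fun hc => hmem ?_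
            exact closedBall_subset_closedBall (by linarith) hc
          have hyx' : s x' y = 0 := by
            refine hsupp x' hx' y fun hc => hmem ?_
            rw [mem_closedBall] at hc ⊢
            have hxx : dist x' x = d := by rw [dist_comm]
            calc dist y x ≤ dist y x' + dist x' x := dist_triangle _ _ _
              _ ≤ 2 * ρ + ρ := by rw [hxx]; linarith
              _ ≤ 3 * ρ := by linarith
          simp [hyx, hyx']
      calc ‖∫ y, (s x y - s x' y) * (G y - G x) ∂σ‖
          ≤ ∫ y, (closedBall x (3 * ρ)).indicator
              (fun _ => C₁ * ρ ^ (-(n:ℝ) - 1) * d * ((K:ℝ) * (3 * ρ))) y ∂σ :=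
            norm_integral_le_of_norm_le hb hptwise
        _ = (C₁ * ρ ^ (-(n:ℝ) - 1) * d * ((K:ℝ) * (3 * ρ)))
              * (σ (closedBall x (3 * ρ))).toReal := by
            rw [integral_indicator_const _ measurableSet_closedBall, smul_eq_mul, mul_comm, measureReal_def]
    have htm : (σ (closedBall x (3 * ρ))).toReal ≤ C₀ * (3 * ρ) ^ n :=
      ENNReal.toReal_le_of_le_ofReal
        (mul_nonneg hC₀.le (by positivity)) hball
    have hrpow : ρ ^ (-(n:ℝ) - 1) * (ρ * ρ ^ n) = 1 := by
      have h1 : ρ ^ (-(n:ℝ) - 1) = (ρ ^ (n + 1 : ℕ))⁻¹ := by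
        rw [show (-(n:ℝ) - 1) = -((n + 1 : ℕ) : ℝ) by push_cast; ring,
          Real.rpow_neg hρ.le, Real.rpow_natCast]
      rw [h1, pow_succ]
      field_simp
    have hLnn : (0:ℝ) ≤ C₁ * ρ ^ (-(n:ℝ) - 1) * d * ((K:ℝ) * (3 * ρ)) :=
      mul_nonneg (mul_nonneg hLfac.le hdnn) (mul_nonneg K.coe_nonneg (by linarith))
    calc dist (∫ y, s x y * G y ∂σ) (∫ y, s x' y * G y ∂σ)
        = |(∫ y, s x y * G y ∂σ) - (∫ y, s x' y * G y ∂σ)| := Real.dist_eq _ _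
      _ = |∫ y, (s x y - s x' y) * (G y - G x) ∂σ| := by rw [hkey]
      _ ≤ (C₁ * ρ ^ (-(n:ℝ) - 1) * d * ((K:ℝ) * (3 * ρ)))
            * (σ (closedBall x (3 * ρ))).toReal := hbnd
      _ ≤ (C₁ * ρ ^ (-(n:ℝ) - 1) * d * ((K:ℝ) * (3 * ρ))) * (C₀ * (3 * ρ) ^ n) :=
          mul_le_mul_of_nonneg_left htm hLnn
      _ = (3 ^ (n + 1) * C₀ * C₁ * (K:ℝ) * d) * (ρ ^ (-(n:ℝ) - 1) * (ρ * ρ ^ n)) := by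
          rw [mul_pow]; ring
      _ = 3 ^ (n + 1) * C₀ * C₁ * (K:ℝ) * d := by rw [hrpow, mul_one]
      _ ≤ C * (K:ℝ) * d := by
          have h1 : (3:ℝ) ^ (n + 1) * C₀ * C₁ ≤ 3 ^ (n + 1) * max C₀ 1 * C₁ := by
            refine mul_le_mul_of_nonneg_right ?_ hC₁.le
            exact mul_le_mul_of_nonneg_left (le_max_left _ _) (by positivity)
          have h2 : (3:ℝ) ^ (n + 1) * max C₀ 1 * C₁ ≤ C := by rw [hCdef]; linarith
          have h3 : (3:ℝ) ^ (n + 1) * C₀ * C₁ * ((K:ℝ) * d) ≤ C * ((K:ℝ) * d) :=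
            mul_le_mul_of_nonneg_right (h1.trans h2) (mul_nonneg K.coe_nonneg hdnn)
          linarith [h3]
  · -- far case: ρ < d
    have t1 := hnear x hx
    have t2 := hnear x' hx'
    have t3 := hGlip.dist_le_mul x x'
    have e1 : dist (∫ y, s x y * G y ∂σ) (G x) ≤ (K:ℝ) * (2 * ρ) := by
      rw [Real.dist_eq]; exact t1
    have e2 : dist (G x') (∫ y, s x' y * G y ∂σ) ≤ (K:ℝ) * (2 * ρ) := by
      rw [dist_comm, Real.dist_eq]; exact t2
    have h4 : (K:ℝ) * (2 * ρ) ≤ (K:ℝ) * (2 * d) :=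
      mul_le_mul_of_nonneg_left (by linarith) K.coe_nonneg
    have h5 : (5:ℝ) ≤ C := by
      have h6 : (0:ℝ) ≤ 3 ^ (n + 1) * max C₀ 1 * C₁ :=
        le_of_lt (mul_pos (mul_pos (pow_pos (by norm_num) _) hmax) hC₁)
      rw [hCdef]; linarith
    have h7 : (5:ℝ) * ((K:ℝ) * d) ≤ C * ((K:ℝ) * d) :=
      mul_le_mul_of_nonneg_right h5 (mul_nonneg K.coe_nonneg hdnn)
    calc dist (∫ y, s x y * G y ∂σ) (∫ y, s x' y * G y ∂σ)
        ≤ dist (∫ y, s x y * G y ∂σ) (G x) + dist (G x) (G x')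
            + dist (G x') (∫ y, s x' y * G y ∂σ) := dist_triangle4 _ _ _ _
      _ ≤ (K:ℝ) * (2 * ρ) + (K:ℝ) * d + (K:ℝ) * (2 * ρ) := by
          have := t3
          rw [← hd] at this
          linarith [e1, e2, this]
      _ ≤ C * (K:ℝ) * d := by nlinarith [h4, h7]
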